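/- For every list l of n distinct elements over a linearly ordered type, the expected number of comparisons performed by randomized quicksort on l equals 2·(n+1)·H_n − 4·n. -/

import Mathlib

/-!
Conditioning on the pivot, whose rank `r` among the `n` distinct elements is uniform on
`{0, …, n - 1}`, the expected cost `E n` satisfies
`E n = n - 1 + (1/n) ∑_r (E r + E (n - 1 - r))`, i.e. `n E n = n (n - 1) + 2 ∑_{r < n} E r`.
Subtracting consecutive instances gives `(n + 1) E (n + 1) = (n + 2) E n + 2 n`, which the closed
form `2 (n + 1) H_n - 4 n` satisfies.
Expectations are taken in `ℝ≥0∞`, so that no summability has to be established along the way.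
-/

/-- The `n`-th harmonic number `H_n = ∑_{k=1}^{n} 1/k`. -/
noncomputable def harmonicNum (n : ℕ) : ℝ := ∑ k ∈ Finset.Icc 1 n, (1 : ℝ) / k

/-- The distribution of the number of comparisons performed by randomized quicksort:
a pivot index is chosen uniformly at random, the remaining `n - 1` elements are
partitioned (using `n - 1` comparisons) into those smaller and those larger than the
pivot, and the two parts are recursively sorted. -/
noncomputable def rquickCost {α : Type*} [LinearOrder α] : List α → PMF ℕ
  | [] => PMF.pure 0
  | x :: xs =>
    haveI : Nonempty (Fin (x :: xs).length) := ⟨⟨0, by simp⟩⟩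
    (PMF.uniformOfFintype (Fin (x :: xs).length)).bind fun i =>
      let p := (x :: xs).get i
      let rest := (x :: xs).eraseIdx i
      (rquickCost (rest.filter fun y => decide (y < p))).bind fun c₁ =>
        (rquickCost (rest.filter fun y => decide (p < y))).map fun c₂ =>
          rest.length + c₁ + c₂
  termination_by l => l.length
  decreasing_by
    all_goals
      calc (List.filter _ ((x :: xs).eraseIdx i)).length
          ≤ ((x :: xs).eraseIdx i).length := List.length_filter_le _ _
        _ < (x :: xs).length := by
            have := i.isLt
            rw [List.length_eraseIdx]
            split <;> simp_all

open ENNReal Finset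

noncomputable def expectedComparisons (n : ℕ) : ℝ := 2 * ((n : ℝ) + 1) * harmonicNum n - 4 * n

theorem harmonicNum_succ (n : ℕ) : harmonicNum (n + 1) = harmonicNum n + 1 / (n + 1) := by
  rw [harmonicNum, sum_Icc_succ_top (by omega), ← harmonicNum]
  push_cast
  ring

theorem expectedComparisons_zero : expectedComparisons 0 = 0 := by
  simp [expectedComparisons, harmonicNum]

theorem succ_mul_expectedComparisons_succ (n : ℕ) :
    ((n : ℝ) + 1) * expectedComparisons (n + 1) =
      ((n : ℝ) + 2) * expectedComparisons n + 2 * n := by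
  rw [expectedComparisons, expectedComparisons, harmonicNum_succ]
  push_cast
  field_simp
  ring

theorem expectedComparisons_nonneg (n : ℕ) : 0 ≤ expectedComparisons n := by
  induction n with
  | zero => rw [expectedComparisons_zero]
  | succ n ih => nlinarith [succ_mul_expectedComparisons_succ n, n.cast_nonneg (α := ℝ)]

theorem mul_expectedComparisons (n : ℕ) :
    n * expectedComparisons n =
      n * ((n : ℝ) - 1) + 2 * ∑ r ∈ range n, expectedComparisons r := by
  induction n with
  | zero => simp
  | succ n ih =>
    rw [sum_range_succ]
    push_cast
    linarith [succ_mul_expectedComparisons_succ n]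

/-- The quicksort recurrence: partition cost plus the average, over the rank `r` of the pivot,
of the costs of the two recursive calls. -/
theorem expectedComparisons_eq_average {n : ℕ} (hn : n ≠ 0) :
    expectedComparisons n = (n : ℝ)⁻¹ * ∑ r ∈ range n,
      (((n - 1 : ℕ) : ℝ) + expectedComparisons r + expectedComparisons (n - 1 - r)) := by
  have hn' : (n : ℝ) ≠ 0 := by exact_mod_cast hn
  rw [sum_add_distrib, sum_add_distrib, sum_range_reflect expectedComparisons n, sum_const,
    card_range, nsmul_eq_mul, Nat.cast_pred (Nat.pos_of_ne_zero hn)]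
  field_simp
  linarith [mul_expectedComparisons n]

theorem ofReal_expectedComparisons_eq_average {n : ℕ} (hn : n ≠ 0) :
    ENNReal.ofReal (expectedComparisons n) = (n : ℝ≥0∞)⁻¹ * ∑ r ∈ range n,
      (((n - 1 : ℕ) : ℝ≥0∞) + .ofReal (expectedComparisons r) +
        .ofReal (expectedComparisons (n - 1 - r))) := by
  have hpos : (0 : ℝ) < n := by exact_mod_cast Nat.pos_of_ne_zero hn
  have hterm : ∀ r, (((n - 1 : ℕ) : ℝ≥0∞) + .ofReal (expectedComparisons r) +
      .ofReal (expectedComparisons (n - 1 - r))) = .ofReal (((n - 1 : ℕ) : ℝ) +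
        expectedComparisons r + expectedComparisons (n - 1 - r)) := fun r => by
    rw [ENNReal.ofReal_add (add_nonneg (Nat.cast_nonneg _) (expectedComparisons_nonneg _))
      (expectedComparisons_nonneg _), ENNReal.ofReal_add (Nat.cast_nonneg _)
      (expectedComparisons_nonneg _), ofReal_natCast]
  simp only [hterm]
  rw [← ENNReal.ofReal_sum_of_nonneg fun r _ => add_nonneg (add_nonneg (Nat.cast_nonneg _)
      (expectedComparisons_nonneg _)) (expectedComparisons_nonneg _),
    ← ofReal_natCast, ← ENNReal.ofReal_inv_of_pos hpos,
    ← ENNReal.ofReal_mul (by positivity), ← expectedComparisons_eq_average hn]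

namespace PMF

noncomputable def mean (p : PMF ℕ) : ℝ≥0∞ := ∑' k, p k * k

theorem mean_pure (n : ℕ) : mean (pure n) = n := by
  rw [mean, tsum_eq_single n fun k hk => by simp [pure_apply, hk]]
  simp

theorem mean_bind {β : Type*} (p : PMF β) (f : β → PMF ℕ) :
    mean (p.bind f) = ∑' b, p b * mean (f b) := by
  simp only [mean, bind_apply, ← ENNReal.tsum_mul_right, ← ENNReal.tsum_mul_left,
    mul_assoc]
  exact ENNReal.tsum_comm

theorem tsum_mul_const_add (p : PMF ℕ) (a : ℝ≥0∞) : ∑' k, p k * (a + k) = a + mean p := by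
  simp only [mul_add, ENNReal.tsum_add, ENNReal.tsum_mul_right, tsum_coe, one_mul, mean]

theorem mean_map_const_add (p : PMF ℕ) (m : ℕ) : mean (p.map (m + ·)) = m + mean p := by
  simp only [map, mean_bind, Function.comp_apply, mean_pure, Nat.cast_add, tsum_mul_const_add]

theorem mean_bind_map_add (p q : PMF ℕ) (m : ℕ) :
    mean (p.bind fun a => q.map fun b => m + a + b) = m + mean p + mean q := by
  simp only [mean_bind, mean_map_const_add, Nat.cast_add, tsum_mul_const_add,
    add_right_comm (m : ℝ≥0∞) _ (mean q)]

theorem toReal_mean (p : PMF ℕ) : (mean p).toReal = ∑' k, (p k).toReal * k := by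
  rw [mean, ENNReal.tsum_toReal_eq fun k => mul_ne_top (p.apply_ne_top k) (natCast_ne_top k)]
  simp

end PMF

namespace List

theorem length_filter_erase_lt {α : Type*} [BEq α] [LawfulBEq α] {l : List α} {a : α}
    (ha : a ∈ l) (q : α → Bool) : ((l.erase a).filter q).length < l.length :=
  (length_filter_le q _).trans_lt (length_erase_add_one ha ▸ Nat.lt_succ_self _)

variable {α : Type*} [LinearOrder α]

def rank (l : List α) (a : α) : ℕ := (l.filter (· < a)).length

theorem rank_lt_length {l : List α} {a : α} (ha : a ∈ l) : rank l a < l.length :=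
  length_filter_lt_length_iff_exists.2 ⟨a, ha, by simp⟩

theorem rank_lt_rank {l : List α} {a b : α} (ha : a ∈ l) (hab : a < b) :
    rank l a < rank l b := by
  have hfilter : l.filter (· < a) = (l.filter (· < b)).filter (· < a) := by
    rw [filter_filter]
    exact filter_congr fun y _ => by simpa using fun h : y < a => h.trans hab
  rw [rank, hfilter]
  exact length_filter_lt_length_iff_exists.2 ⟨a, mem_filter.2 ⟨ha, by simpa⟩, by simp⟩

theorem sum_rank_get {M : Type*} [AddCommMonoid M] {l : List α} (hl : l.Nodup) (f : ℕ → M) :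
    ∑ i : Fin l.length, f (rank l (l.get i)) = ∑ r ∈ Finset.range l.length, f r := by
  let σ : Fin l.length → Fin l.length :=
    fun i => ⟨rank l (l.get i), rank_lt_length (l.get_mem i)⟩
  have hrank : StrictMonoOn (rank l) {a | a ∈ l} := fun _ ha _ _ hab => rank_lt_rank ha hab
  have hσ : σ.Injective := fun i j hij => nodup_iff_injective_get.1 hl <|
    hrank.injOn (l.get_mem i) (l.get_mem j) (congrArg Fin.val hij)
  rw [← Fin.sum_univ_eq_sum_range]
  exact hσ.bijective_of_finite.sum_comp (fun r : Fin l.length => f r)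

theorem filter_lt_erase (l : List α) (a : α) :
    (l.erase a).filter (· < a) = l.filter (· < a) := by
  rw [← erase_filter, erase_of_not_mem (by simp)]

theorem length_filter_gt_erase {l : List α} (hl : l.Nodup) {a : α} (ha : a ∈ l) :
    ((l.erase a).filter (a < ·)).length = l.length - 1 - rank l a := by
  have hgt : (l.erase a).filter (a < ·) = (l.erase a).filter (fun y => !decide (y < a)) :=
    filter_congr fun y hy => by
      rcases (hl.mem_erase_iff.1 hy).1.lt_or_gt with h | h <;> simp [h, not_lt_of_gt h]
  have hsplit := length_eq_length_filter_add (l := l.erase a) (· < a)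
  rw [List.length_erase_of_mem ha, filter_lt_erase] at hsplit
  rw [hgt, rank]
  omega

end List

open PMF in
theorem mean_rquickCost {α : Type*} [LinearOrder α] :
    ∀ {l : List α}, l.Nodup → (rquickCost l).mean = .ofReal (expectedComparisons l.length)
  | [], _ => by
    rw [rquickCost, mean_pure]
    simp [expectedComparisons_zero]
  | x :: xs, hl => by
    rw [rquickCost, mean_bind, tsum_fintype]
    -- without duplicates, removing the pivot by index is removing it by value
    simp only [uniformOfFintype_apply, Fintype.card_fin, ← mul_sum, ← hl.erase_get]
    generalize hxs : x :: xs = l at hl ⊢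
    have branch : ∀ a ∈ l, ((rquickCost ((l.erase a).filter (· < a))).bind fun c₁ =>
        (rquickCost ((l.erase a).filter (a < ·))).map fun c₂ =>
          (l.erase a).length + c₁ + c₂).mean =
        ((l.length - 1 : ℕ) : ℝ≥0∞) + .ofReal (expectedComparisons (l.rank a)) +
          .ofReal (expectedComparisons (l.length - 1 - l.rank a)) := fun a ha => by
      have hsub (q : α → Bool) : ((l.erase a).filter q).Nodup := (hl.erase a).filter q
      rw [mean_bind_map_add, List.length_erase_of_mem ha, mean_rquickCost (hsub _),
        mean_rquickCost (hsub _), List.filter_lt_erase, List.length_filter_gt_erase hl ha,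
        List.rank]
    rw [sum_congr rfl fun i _ => branch _ (l.get_mem i), l.sum_rank_get hl
      (fun r => ((l.length - 1 : ℕ) : ℝ≥0∞) + .ofReal (expectedComparisons r) +
        .ofReal (expectedComparisons (l.length - 1 - r))),
      ← ofReal_expectedComparisons_eq_average (by simp [← hxs])]
termination_by l => l.length
decreasing_by all_goals exact List.length_filter_erase_lt ha _

theorem rquick_expected_comparisons {α : Type*} [LinearOrder α]
    (l : List α) (hl : l.Nodup) :
    ∑' k : ℕ, ((rquickCost l) k).toReal * k =
      2 * ((l.length : ℝ) + 1) * harmonicNum l.length - 4 * l.length := by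
  rw [← PMF.toReal_mean, mean_rquickCost hl,
    ENNReal.toReal_ofReal (expectedComparisons_nonneg _), expectedComparisons]
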